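/- arXiv:1311.7221 — 4 statements merged into one kernel-verified Lean document; each statement's English description precedes it below -/
import Mathlib

section
/- (Kato's inequality.) Let G = (V,E) be a locally finite graph, θ a phase and q : V → ℝ. Then for every finitely supported f : V → ℂ one has Q_Δ(|f|) + Q_q(|f|) ≤ Q_θ(f) + Q_q(f), where |f| denotes the pointwise absolute value of f. -/
open scoped BigOperators

noncomputable section

variable {V : Type*} [DecidableEq V] (G : SimpleGraph V) [DecidableRel G.Adj]

/-- The squared `ℓ²`-norm `‖f‖² = ∑_x |f x|²` of a (finitely supported) function. -/
def qNormSq (f : V → ℂ) : ℝ := ∑' x, ‖f x‖ ^ 2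

/-- The quadratic form of the Laplacian:
`Q_Δ(f) = (1/2) ∑_{x ~ y} |f x - f y|²` (sum over ordered pairs of adjacent vertices). -/
def qLap (f : V → ℂ) : ℝ :=
  (1 / 2) * ∑' (x : V), ∑' (y : V), if G.Adj x y then ‖f x - f y‖ ^ 2 else 0

/-- The magnetic quadratic form
`Q_θ(f) = (1/2) ∑_{x ~ y} |f x - e^{iθ(x,y)} f y|²`. -/
def qMag (θ : V → V → ℝ) (f : V → ℂ) : ℝ :=
  (1 / 2) * ∑' (x : V), ∑' (y : V),
    if G.Adj x y then ‖f x - Complex.exp (Complex.I * (θ x y)) * f y‖ ^ 2 else 0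

/-- The quadratic form of a potential: `Q_q(f) = ∑_x q x * |f x|²`. -/
def qPot (q : V → ℝ) (f : V → ℂ) : ℝ := ∑' x, q x * ‖f x‖ ^ 2

variable [G.LocallyFinite]

/-- The quadratic form of the degree: `Q_deg(f) = ∑_x deg x * |f x|²`. -/
def qDeg (f : V → ℂ) : ℝ := ∑' x, (G.degree x : ℝ) * ‖f x‖ ^ 2

/-- Twice the number of undirected edges of the subgraph induced on `W`,
i.e. the number of ordered pairs of adjacent vertices in `W × W`. -/
def edgesTwice (W : Finset V) : ℕ := ((W ×ˢ W).filter fun p => G.Adj p.1 p.2).card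

/-- The cardinality `|∂W|` of the edge boundary of `W`. -/
def bdryCard (W : Finset V) : ℕ :=
  ∑ x ∈ W, ((G.neighborFinset x).filter fun y => y ∉ W).card

/-- `(G, q)` is `(a,k)`-sparse: `2|E_W| ≤ k|W| + a(|∂W| + q₊(W))` for all finite `W`. -/
def IsSparse (q : V → ℝ) (a k : ℝ) : Prop :=
  ∀ W : Finset V,
    (edgesTwice G W : ℝ) ≤ k * W.card + a * ((bdryCard G W : ℝ) + ∑ x ∈ W, max (q x) 0)

/-- The potential `q` belongs to the class `K_α`:
`Q_{q₋}(f) ≤ α (Q_Δ(f) + Q_{q₊}(f)) + C ‖f‖²` for all finitely supported `f`. -/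
def KClass (q : V → ℝ) (α : ℝ) : Prop :=
  ∃ C : ℝ, 0 ≤ C ∧ ∀ f : V → ℂ, (Function.support f).Finite →
    qPot (fun x => max (-q x) 0) f ≤
      α * (qLap G f + qPot (fun x => max (q x) 0) f) + C * qNormSq f

/-- The potential `q` belongs to the magnetic class `K_α^θ`:
`Q_{q₋}(f) ≤ α (Q_θ(f) + Q_{q₊}(f)) + C ‖f‖²` for all finitely supported `f`. -/
def KClassTheta (θ : V → V → ℝ) (q : V → ℝ) (α : ℝ) : Prop :=
  ∃ C : ℝ, 0 ≤ C ∧ ∀ f : V → ℂ, (Function.support f).Finite →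
    qPot (fun x => max (-q x) 0) f ≤
      α * (qMag G θ f + qPot (fun x => max (q x) 0) f) + C * qNormSq f

/-- The Cheeger (isoperimetric) constant of `U ⊆ V`:
the infimum over nonempty finite `W ⊆ U` of `(|∂W| + q(W)) / (deg(W) + q(W))`,
with the convention that the quotient is `0` when the denominator vanishes. -/
def cheeger (q : V → ℝ) (U : Set V) : ℝ :=
  ⨅ W : {W : Finset V // ↑W ⊆ U ∧ W.Nonempty},
    if (∑ x ∈ W.1, ((G.degree x : ℝ) + q x)) = 0 then 0
    else ((bdryCard G W.1 : ℝ) + ∑ x ∈ W.1, q x) / ∑ x ∈ W.1, ((G.degree x : ℝ) + q x)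

/-- The Cheeger constant at infinity: `α_∞ = sup over finite K of α_{V∖K}`. -/
def cheegerInfty (q : V → ℝ) : ℝ :=
  ⨆ K : Finset V, cheeger G q ((↑K : Set V)ᶜ)

/-! Since `‖e^{iθ}‖ = 1`, the reverse triangle inequality gives
`|‖f x‖ - ‖f y‖| ≤ ‖f x - e^{iθ(x,y)} f y‖` on every edge, while the potential terms of `f` and
`|f|` coincide. Summing over edges is legitimate because finite support of `f` and local
finiteness make every edge sum finitely supported. -/

theorem norm_ofReal_norm_sub_norm_le_norm_sub_mul {a b u : ℂ} (hu : ‖u‖ = 1) :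
    ‖(‖a‖ : ℂ) - ‖b‖‖ ≤ ‖a - u * b‖ := by
  rw [← Complex.ofReal_sub, Complex.norm_real, Real.norm_eq_abs]
  simpa [norm_mul, hu] using abs_norm_sub_norm_le a (u * b)

omit [DecidableEq V] in
theorem qPot_ofReal_norm (q : V → ℝ) (f : V → ℂ) :
    qPot q (fun x => (‖f x‖ : ℂ)) = qPot q f := by
  simp only [qPot, Complex.norm_real, norm_norm]

omit [DecidableEq V] in
theorem tsum_ite_adj_eq_sum_neighborFinset (x : V) (g : V → ℝ) :
    ∑' y, (if G.Adj x y then g y else 0) = ∑ y ∈ G.neighborFinset x, g y := by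
  rw [tsum_eq_sum (s := G.neighborFinset x) fun y hy => by simp_all]
  exact Finset.sum_congr rfl fun y hy => if_pos ((G.mem_neighborFinset x y).1 hy)

omit [DecidableEq V] [DecidableRel G.Adj] in
theorem summable_sum_neighborFinset {g : V → V → ℝ} {s : Set V} (hs : s.Finite)
    (hg : ∀ x y, G.Adj x y → x ∉ s → y ∉ s → g x y = 0) :
    Summable fun x => ∑ y ∈ G.neighborFinset x, g x y := by
  refine summable_of_hasFiniteSupport <|
    (hs.union (hs.biUnion fun y _ => (G.neighborSet y).toFinite)).subset fun x hx => ?_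
  by_contra hxs
  simp only [Set.mem_union, Set.mem_iUnion, not_or, not_exists] at hxs
  refine hx (Finset.sum_eq_zero fun y hy => ?_)
  have hxy := (G.mem_neighborFinset x y).1 hy
  exact hg x y hxy hxs.1 fun hys => hxs.2 y hys hxy.symm

omit [DecidableEq V] [DecidableRel G.Adj] in
theorem tsum_sum_neighborFinset_mono {g h : V → V → ℝ}
    (hg : ∀ x y, G.Adj x y → 0 ≤ g x y) (hgh : ∀ x y, G.Adj x y → g x y ≤ h x y)
    (hh : Summable fun x => ∑ y ∈ G.neighborFinset x, h x y) :
    ∑' x, ∑ y ∈ G.neighborFinset x, g x y ≤ ∑' x, ∑ y ∈ G.neighborFinset x, h x y := by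
  have hle : ∀ x, ∑ y ∈ G.neighborFinset x, g x y ≤ ∑ y ∈ G.neighborFinset x, h x y :=
    fun x => Finset.sum_le_sum fun y hy => hgh x y ((G.mem_neighborFinset x y).1 hy)
  have hnonneg : ∀ x, 0 ≤ ∑ y ∈ G.neighborFinset x, g x y :=
    fun x => Finset.sum_nonneg fun y hy => hg x y ((G.mem_neighborFinset x y).1 hy)
  exact (hh.of_nonneg_of_le hnonneg hle).tsum_le_tsum hle hh

omit [DecidableEq V] in
theorem qLap_ofReal_norm_le_qMag (θ : V → V → ℝ) {f : V → ℂ}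
    (hf : (Function.support f).Finite) :
    qLap G (fun x => (‖f x‖ : ℂ)) ≤ qMag G θ f := by
  simp only [qLap, qMag, tsum_ite_adj_eq_sum_neighborFinset]
  gcongr 1 / 2 * ?_
  refine tsum_sum_neighborFinset_mono G (fun _ _ _ => by positivity) (fun x y _ => ?_)
    (summable_sum_neighborFinset G hf fun x y _ hx hy => ?_)
  · exact pow_le_pow_left₀ (norm_nonneg _)
      (norm_ofReal_norm_sub_norm_le_norm_sub_mul (Complex.norm_exp_I_mul_ofReal _)) 2
  · simp [Function.notMem_support.1 hx, Function.notMem_support.1 hy]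

theorem stmt9 (θ : V → V → ℝ) (q : V → ℝ)
    (f : V → ℂ) (hf : (Function.support f).Finite) :
    qLap G (fun x => (‖f x‖ : ℂ)) + qPot q (fun x => (‖f x‖ : ℂ))
      ≤ qMag G θ f + qPot q f := by
  rw [qPot_ofReal_norm]
  exact add_le_add_left (qLap_ofReal_norm_le_qMag G θ hf) _

end
end

section
/- Let G = (V,E) be a locally finite graph, q : V → ℝ, a > 0 and k ≥ 0 such that (G,q) is (a,k)-sparse, let θ be a phase and α > 0. Set ã := √(min(1/4, a²) + 2a + a²)/(1+a). If q ∈ K_α^θ, then q ∈ K_{α'} for α' = α(1+ã)/(1−ã); that is, there is C' ≥ 0 such that for all finitely supported f : V → ℂ, Q_{q₋}(f) ≤ α'(Q_Δ(f) + Q_{q₊}(f)) + C'·‖f‖². In particular, K_{0⁺}^θ = K_{0⁺}. -/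
/-!
Write `u = |f|` for a finitely supported `f`. By the triangle inequality the magnetic form of `u`
is at most its signless form `½ ∑_{x ~ y} (u x + u y)²`, which by the parallelogram law is
`2 Q_deg(u) - Q_Δ(u)`; by the reverse triangle inequality `Q_Δ(u)` is at most both `Q_Δ(f)` and
`Q_θ(f)`. So it suffices to bound `Q_deg` by `Q_Δ(u)`. Sparseness, applied to the superlevel sets of
`u²` (a co-area argument), bounds `Q_deg(u) + Q_{q₊}(u)` by
`k ‖u‖² + (1 + a) (T + Q_{q₊}(u))` with `T = ∑_{x ~ y} (u x² - u y²)₊`, and Cauchy–Schwarz gives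
`T² ≤ Q_Δ(u) (2 Q_deg(u) - Q_Δ(u))`. Solving this quadratic inequality yields
`(1 - ã) (Q_deg + Q_{q₊}) ≤ Q_Δ(u) + Q_{q₊} + C ‖f‖²`, and hence
`Q_θ(u) + Q_{q₊} ≤ (1 + ã)/(1 - ã) (Q_Δ(f) + Q_{q₊}) + C' ‖f‖²`.
-/

open scoped BigOperators

open Finset

noncomputable def qSignless {V : Type*} (G : SimpleGraph V) [DecidableRel G.Adj] (f : V → ℂ) : ℝ :=
  (1 / 2) * ∑' (x : V), ∑' (y : V), if G.Adj x y then ‖f x + f y‖ ^ 2 else 0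

noncomputable def modulus {V : Type*} (f : V → ℂ) : V → ℂ := fun x => (‖f x‖ : ℂ)

def edgePairs {V : Type*} (G : SimpleGraph V) [DecidableRel G.Adj] (S : Finset V) :
    Finset (V × V) :=
  (S ×ˢ S).filter fun p => G.Adj p.1 p.2

def IsNbhdOfSupport {V M : Type*} [Zero M] (G : SimpleGraph V) (f : V → M) (S : Finset V) :
    Prop :=
  ∀ x, f x ≠ 0 → x ∈ S ∧ ∀ y, G.Adj x y → y ∈ S

section Reduction

variable {V : Type*} {G : SimpleGraph V}

@[simp]
theorem norm_modulus (f : V → ℂ) (x : V) : ‖modulus f x‖ = ‖f x‖ := by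
  simp [modulus]

theorem support_modulus (f : V → ℂ) : Function.support (modulus f) = Function.support f := by
  ext x
  simp [modulus]

theorem modulus_ne_zero {f : V → ℂ} {x : V} : modulus f x ≠ 0 ↔ f x ≠ 0 := by
  simp [modulus]

@[simp]
theorem qPot_modulus (h : V → ℝ) (f : V → ℂ) : qPot h (modulus f) = qPot h f := by
  simp [qPot]

@[simp]
theorem qNormSq_modulus (f : V → ℂ) : qNormSq (modulus f) = qNormSq f := by
  simp [qNormSq]

@[simp]
theorem qDeg_modulus [G.LocallyFinite] (f : V → ℂ) : qDeg G (modulus f) = qDeg G f := by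
  simp [qDeg]

theorem exists_isNbhdOfSupport [G.LocallyFinite] {M : Type*} [Zero M] {f : V → M}
    (hf : (Function.support f).Finite) : ∃ S, IsNbhdOfSupport G f S := by
  classical
  refine ⟨hf.toFinset ∪ hf.toFinset.biUnion fun x => G.neighborFinset x, fun x hx => ?_⟩
  have hx' := hf.mem_toFinset.2 hx
  exact ⟨mem_union_left _ hx', fun y hxy =>
    mem_union_right _ (mem_biUnion.2 ⟨x, hx', (G.mem_neighborFinset x y).2 hxy⟩)⟩

namespace IsNbhdOfSupport

variable {M N : Type*} [Zero M] [Zero N] {f : V → M} {S : Finset V}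

theorem mono {g : V → N} (hS : IsNbhdOfSupport G f S) (hgf : ∀ x, g x ≠ 0 → f x ≠ 0) :
    IsNbhdOfSupport G g S := fun x hx => hS x (hgf x hx)

theorem mem_of_adj (hS : IsNbhdOfSupport G f S) {x y : V} (hxy : G.Adj x y)
    (h : f x ≠ 0 ∨ f y ≠ 0) : x ∈ S ∧ y ∈ S := by
  rcases h with h | h
  · exact ⟨(hS x h).1, (hS x h).2 y hxy⟩
  · exact ⟨(hS y h).2 x hxy.symm, (hS y h).1⟩

theorem tsum_eq_sum (hS : IsNbhdOfSupport G f S) {F : V → ℝ} (hF : ∀ x, f x = 0 → F x = 0) :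
    ∑' x, F x = ∑ x ∈ S, F x :=
  _root_.tsum_eq_sum fun x hx => hF x (by_contra fun h => hx (hS x h).1)

end IsNbhdOfSupport

variable [DecidableRel G.Adj]

theorem sum_edgePairs_swap (S : Finset V) (t : V × V → ℝ) :
    ∑ p ∈ edgePairs G S, t p.swap = ∑ p ∈ edgePairs G S, t p :=
  sum_equiv (Equiv.prodComm V V) (fun p => by simp [edgePairs, G.adj_comm, and_comm])
    fun _ _ => rfl

variable [G.LocallyFinite]

theorem tsum_ite_adj (x : V) (F : V → ℝ) :
    ∑' y, (if G.Adj x y then F y else 0) = ∑ y ∈ G.neighborFinset x, F y := by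
  rw [_root_.tsum_eq_sum (s := G.neighborFinset x) fun y hy => if_neg (by simpa using hy)]
  exact sum_congr rfl fun y hy => if_pos (by simpa using hy)

theorem sum_sum_neighborFinset_eq_sum_edgePairs {S : Finset V} {F : V → V → ℝ}
    (hF : ∀ x ∈ S, ∀ y, G.Adj x y → F x y ≠ 0 → y ∈ S) :
    ∑ x ∈ S, ∑ y ∈ G.neighborFinset x, F x y = ∑ p ∈ edgePairs G S, F p.1 p.2 := by
  rw [edgePairs, sum_filter, sum_product]
  refine sum_congr rfl fun x hx => ?_
  rw [← sum_filter]
  refine (sum_subset (fun y hy => ?_) fun y hy hyS => ?_).symm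
  · simp_all
  · by_contra h
    exact hyS (mem_filter.2 ⟨hF x hx y ((G.mem_neighborFinset _ _).1 hy) h, by simpa using hy⟩)

theorem IsNbhdOfSupport.tsum_tsum_adj_eq {M : Type*} [Zero M] {f : V → M} {S : Finset V}
    (hS : IsNbhdOfSupport G f S) {F : V → V → ℝ} (hF : ∀ x y, f x = 0 → f y = 0 → F x y = 0) :
    ∑' x, ∑' y, (if G.Adj x y then F x y else 0) = ∑ p ∈ edgePairs G S, F p.1 p.2 := by
  have hS' : ∀ x y, G.Adj x y → F x y ≠ 0 → x ∈ S ∧ y ∈ S := fun x y hxy hF0 =>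
    hS.mem_of_adj hxy (not_and_or.1 fun h => hF0 (hF x y h.1 h.2))
  simp_rw [tsum_ite_adj]
  rw [_root_.tsum_eq_sum (s := S), sum_sum_neighborFinset_eq_sum_edgePairs]
  · exact fun x _ y hxy hF0 => (hS' x y hxy hF0).2
  · exact fun x hx => sum_eq_zero fun y hy => by
      by_contra h
      exact hx (hS' x y ((G.mem_neighborFinset _ _).1 hy) h).1

end Reduction

section Forms

variable {V : Type*} {G : SimpleGraph V} [DecidableRel G.Adj]

theorem qMag_zero (f : V → ℂ) : qMag G (fun _ _ => 0) f = qLap G f := by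
  simp [qMag, qLap]

variable [G.LocallyFinite]

namespace IsNbhdOfSupport

variable {f : V → ℂ} {S : Finset V}

theorem qLap_eq (hS : IsNbhdOfSupport G f S) :
    qLap G f = 1 / 2 * ∑ p ∈ edgePairs G S, ‖f p.1 - f p.2‖ ^ 2 := by
  rw [qLap, hS.tsum_tsum_adj_eq]
  intro x y hx hy
  simp [hx, hy]

theorem qSignless_eq (hS : IsNbhdOfSupport G f S) :
    qSignless G f = 1 / 2 * ∑ p ∈ edgePairs G S, ‖f p.1 + f p.2‖ ^ 2 := by
  rw [qSignless, hS.tsum_tsum_adj_eq]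
  intro x y hx hy
  simp [hx, hy]

theorem qMag_eq (hS : IsNbhdOfSupport G f S) (θ : V → V → ℝ) :
    qMag G θ f = 1 / 2 * ∑ p ∈ edgePairs G S,
      ‖f p.1 - Complex.exp (Complex.I * θ p.1 p.2) * f p.2‖ ^ 2 := by
  rw [qMag, hS.tsum_tsum_adj_eq]
  intro x y hx hy
  simp [hx, hy]

theorem qDeg_eq (hS : IsNbhdOfSupport G f S) :
    qDeg G f = ∑ p ∈ edgePairs G S, ‖f p.1‖ ^ 2 := by
  rw [qDeg, hS.tsum_eq_sum fun x hx => by simp [hx],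
    ← sum_sum_neighborFinset_eq_sum_edgePairs (F := fun x _ => ‖f x‖ ^ 2)
      fun x _ y hxy h => (hS x (by simpa using h)).2 y hxy]
  simp [G.card_neighborFinset_eq_degree]

theorem sq_sum_posPart_le (hS : IsNbhdOfSupport G f S) :
    (∑ p ∈ edgePairs G S, max (‖f p.1‖ ^ 2 - ‖f p.2‖ ^ 2) 0) ^ 2 ≤
      qLap G (modulus f) * qSignless G (modulus f) := by
  have hS' := hS.mono fun x => modulus_ne_zero.1
  have hsym : 2 * ∑ p ∈ edgePairs G S, max (‖f p.1‖ ^ 2 - ‖f p.2‖ ^ 2) 0 =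
      ∑ p ∈ edgePairs G S, |‖f p.1‖ - ‖f p.2‖| * |‖f p.1‖ + ‖f p.2‖| := by
    -- swapping the pair negates `s = ‖f p.1‖² - ‖f p.2‖²`, and `s₊ + (-s)₊ = |s|`
    rw [two_mul]
    nth_rw 2 [← sum_edgePairs_swap]
    rw [← sum_add_distrib]
    refine sum_congr rfl fun p _ => ?_
    rw [← abs_mul, ← max_zero_add_max_neg_zero_eq_abs_self]
    simp only [Prod.fst_swap, Prod.snd_swap]
    ring_nf
  have hcs := sum_mul_sq_le_sq_mul_sq (edgePairs G S) (fun p => |‖f p.1‖ - ‖f p.2‖|)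
    (fun p => |‖f p.1‖ + ‖f p.2‖|)
  rw [← hsym] at hcs
  rw [hS'.qLap_eq, hS'.qSignless_eq]
  simp only [modulus, ← Complex.ofReal_sub, ← Complex.ofReal_add, Complex.norm_real,
    Real.norm_eq_abs, sq_abs] at hcs ⊢
  nlinarith

end IsNbhdOfSupport

variable {f : V → ℂ}

theorem qLap_modulus_le_qMag (hf : (Function.support f).Finite) (θ : V → V → ℝ) :
    qLap G (modulus f) ≤ qMag G θ f := by
  obtain ⟨S, hS⟩ := exists_isNbhdOfSupport (G := G) hf
  rw [(hS.mono fun x => modulus_ne_zero.1).qLap_eq, hS.qMag_eq]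
  gcongr with p
  calc ‖modulus f p.1 - modulus f p.2‖
      = |‖f p.1‖ - ‖Complex.exp (Complex.I * θ p.1 p.2) * f p.2‖| := by
        simp [modulus, ← Complex.ofReal_sub, Complex.norm_real, Complex.norm_exp_I_mul_ofReal]
    _ ≤ _ := abs_norm_sub_norm_le _ _

theorem qMag_modulus_le_qSignless (hf : (Function.support f).Finite) (θ : V → V → ℝ) :
    qMag G θ (modulus f) ≤ qSignless G (modulus f) := by
  obtain ⟨S, hS⟩ := exists_isNbhdOfSupport (G := G) hf
  have hS' := hS.mono fun x => modulus_ne_zero.1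
  rw [hS'.qMag_eq, hS'.qSignless_eq]
  gcongr with p
  calc _ ≤ ‖modulus f p.1‖ + ‖Complex.exp (Complex.I * θ p.1 p.2) * modulus f p.2‖ :=
        norm_sub_le _ _
    _ = _ := by
        simp [modulus, ← Complex.ofReal_add, Complex.norm_real, Complex.norm_exp_I_mul_ofReal,
          abs_of_nonneg (add_nonneg (norm_nonneg (f p.1)) (norm_nonneg (f p.2)))]

theorem qLap_add_qSignless (hf : (Function.support f).Finite) :
    qLap G f + qSignless G f = 2 * qDeg G f := by
  obtain ⟨S, hS⟩ := exists_isNbhdOfSupport (G := G) hf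
  have hswap := sum_edgePairs_swap (G := G) S fun p => ‖f p.1‖ ^ 2
  simp only [Prod.fst_swap] at hswap
  rw [hS.qLap_eq, hS.qSignless_eq, hS.qDeg_eq, ← mul_add, ← sum_add_distrib]
  calc 1 / 2 * ∑ p ∈ edgePairs G S, (‖f p.1 - f p.2‖ ^ 2 + ‖f p.1 + f p.2‖ ^ 2)
      = ∑ p ∈ edgePairs G S, ‖f p.1‖ ^ 2 + ∑ p ∈ edgePairs G S, ‖f p.2‖ ^ 2 := by
        rw [← sum_add_distrib, mul_sum]
        refine sum_congr rfl fun p _ => ?_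
        have := parallelogram_law_with_norm ℝ (f p.1) (f p.2)
        nlinarith
    _ = _ := by rw [hswap]; ring

end Forms

section Coarea

variable {V : Type*} [DecidableEq V] {G : SimpleGraph V} [G.LocallyFinite] {S A : Finset V}
  {v w : V → ℝ} {m : ℝ}

theorem sum_mul_eq_add_of_cut (hAS : A ⊆ S) (hA : ∀ x ∈ A, v x = w x + m)
    (hAc : ∀ x ∉ A, v x = 0 ∧ w x = 0) (h : V → ℝ) :
    ∑ x ∈ S, h x * v x = ∑ x ∈ S, h x * w x + m * ∑ x ∈ A, h x := by
  rw [mul_sum, ← inter_eq_right.2 hAS, ← sum_ite_mem, ← sum_add_distrib]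
  refine sum_congr rfl fun x _ => ?_
  by_cases hx : x ∈ A
  · rw [if_pos hx, hA x hx]
    ring
  · rw [if_neg hx, (hAc x hx).1, (hAc x hx).2]
    ring

theorem sum_sum_posPart_sub_eq_add_of_cut (hAS : A ⊆ S) (hm : 0 ≤ m)
    (hA : ∀ x ∈ A, 0 ≤ w x ∧ v x = w x + m) (hAc : ∀ x ∉ A, v x = 0 ∧ w x = 0) :
    ∑ x ∈ S, ∑ y ∈ G.neighborFinset x, max (v x - v y) 0 =
      ∑ x ∈ S, ∑ y ∈ G.neighborFinset x, max (w x - w y) 0 + m * bdryCard G A := by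
  have hpt : ∀ x y, max (v x - v y) 0 = max (w x - w y) 0 + if x ∈ A ∧ y ∉ A then m else 0 := by
    intro x y
    by_cases hx : x ∈ A <;> by_cases hy : y ∈ A
    · rw [if_neg (by tauto), (hA x hx).2, (hA y hy).2]
      ring_nf
    · rw [if_pos ⟨hx, hy⟩, (hA x hx).2, (hAc y hy).1, (hAc y hy).2, max_eq_left, max_eq_left] <;>
        linarith [(hA x hx).1]
    · rw [if_neg (by tauto), (hAc x hx).1, (hAc x hx).2, (hA y hy).2, max_eq_right,
        max_eq_right] <;> linarith [(hA y hy).1]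
    · rw [if_neg (by tauto), (hAc x hx).1, (hAc x hx).2, (hAc y hy).1, (hAc y hy).2]
      simp
  have hbdry : ∑ x ∈ S, ∑ y ∈ G.neighborFinset x, (if x ∈ A ∧ y ∉ A then m else 0) =
      m * bdryCard G A := by
    simp [bdryCard, ite_and, mul_sum, sum_ite_mem, inter_eq_right.2 hAS, sum_ite, mul_comm]
  simp_rw [hpt, sum_add_distrib, hbdry]

theorem sum_mul_le_of_forall_subset {h₁ h₂ : V → ℝ} {c : ℝ}
    (hcut : ∀ A ⊆ S, ∑ x ∈ A, h₁ x ≤ c * bdryCard G A + ∑ x ∈ A, h₂ x)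
    (hv : ∀ x, 0 ≤ v x) (hvS : ∀ x ∉ S, v x = 0) :
    ∑ x ∈ S, h₁ x * v x ≤
      c * ∑ x ∈ S, ∑ y ∈ G.neighborFinset x, max (v x - v y) 0 + ∑ x ∈ S, h₂ x * v x := by
  obtain ⟨n, hn⟩ : ∃ n, #(S.filter fun x => 0 < v x) ≤ n := ⟨_, le_rfl⟩
  induction n generalizing v with
  | zero =>
    have hv0 : ∀ x, v x = 0 := fun x => by
      by_contra hx
      have hxS : x ∈ S := by_contra fun h => hx (hvS x h)
      have hx' : x ∈ S.filter fun x => 0 < v x := mem_filter.2 ⟨hxS, (hv x).lt_of_ne' hx⟩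
      have := card_pos.2 ⟨x, hx'⟩
      omega
    simp [hv0]
  | succ n ih =>
    set A := S.filter fun x => 0 < v x with hAdef
    rcases A.eq_empty_or_nonempty with hA0 | hAne
    · exact ih hv hvS (by simp [← hAdef, hA0])
    -- peel off the bottom layer `m • 1_A` of `v`, where `m` is the least positive value of `v`
    obtain ⟨x₀, hx₀, hmin⟩ := A.exists_min_image v hAne
    set m := v x₀
    set w := fun x => if x ∈ A then v x - m else 0
    have hAS : A ⊆ S := filter_subset _ _
    have hA : ∀ x ∈ A, 0 ≤ w x ∧ v x = w x + m := fun x hx => by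
      simp only [w, if_pos hx]
      exact ⟨by linarith [hmin x hx], by ring⟩
    have hAc : ∀ x ∉ A, v x = 0 ∧ w x = 0 := fun x hx => ⟨by
      by_contra h
      exact hx (mem_filter.2 ⟨by_contra fun hS => h (hvS x hS), (hv x).lt_of_ne' h⟩), if_neg hx⟩
    have hw : ∀ x, 0 ≤ w x := fun x => by
      by_cases hx : x ∈ A
      · exact (hA x hx).1
      · exact (hAc x hx).2.ge
    have hwS : ∀ x ∉ S, w x = 0 := fun x hx => (hAc x fun h => hx (hAS h)).2
    have hcard : #(S.filter fun x => 0 < w x) ≤ n := by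
      have hsub : (S.filter fun x => 0 < w x) ⊆ A.erase x₀ := fun x hx => by
        have hpos := (mem_filter.1 hx).2
        by_cases hxA : x ∈ A
        · refine mem_erase.2 ⟨fun h => ?_, hxA⟩
          subst h
          linarith [(hA _ hxA).2]
        · linarith [(hAc x hxA).2]
      have := card_le_card hsub
      rw [card_erase_of_mem hx₀] at this
      omega
    have hAm := mul_le_mul_of_nonneg_left (hcut A hAS) (mem_filter.1 hx₀).2.le
    rw [sum_mul_eq_add_of_cut hAS (fun x hx => (hA x hx).2) hAc,
      sum_mul_eq_add_of_cut hAS (fun x hx => (hA x hx).2) hAc,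
      sum_sum_posPart_sub_eq_add_of_cut hAS (mem_filter.1 hx₀).2.le hA hAc]
    nlinarith [ih hw hwS hcard]

end Coarea

theorem sub_le_of_sq_le_mul {a b D Q T w : ℝ} (ha : 0 ≤ a) (hb : 0 < b)
    (hab : 2 * a + a ^ 2 ≤ b ^ 2) (hD : 0 ≤ D) (hw : 0 ≤ w)
    (hTQ : T ^ 2 ≤ Q * (2 * D - Q)) (hDT : D - b * w ≤ (1 + a) * T) :
    (1 + a) * (D - Q) ≤ b * D + w := by
  have hQ : 0 ≤ Q := by nlinarith
  rcases le_or_gt D (b * w) with hDw | hDw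
  · have hb1 : b * (1 + a - b) ≤ 1 := by nlinarith
    rcases le_or_gt b (1 + a) with hba | hba
    · nlinarith [mul_le_mul_of_nonneg_left hDw (sub_nonneg.2 hba)]
    · nlinarith
  · -- square both sides, using `Q (2D - Q) = D² - (D - Q)²`
    rcases le_or_gt (D - Q) 0 with hDQ | hDQ
    · nlinarith
    · have hsq : ((1 + a) * (D - Q)) ^ 2 ≤ (b * D + w) ^ 2 := by
        have h1 : (D - b * w) ^ 2 ≤ (1 + a) ^ 2 * T ^ 2 := by
          rw [← mul_pow]; exact pow_le_pow_left₀ (by linarith) hDT 2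
        nlinarith [mul_le_mul_of_nonneg_left hTQ (sq_nonneg (1 + a)), sq_nonneg w,
          sq_nonneg (b * w), mul_le_mul_of_nonneg_right hab (sq_nonneg D)]
      exact le_of_sq_le_sq hsq (by positivity)

theorem one_sub_mul_le_of_sq_le_mul {a t D Q T p r : ℝ} (ha : 0 ≤ a) (ht : 0 < t)
    (hat : 2 * a + a ^ 2 ≤ (t * (1 + a)) ^ 2) (hD : 0 ≤ D) (hp : 0 ≤ p) (hr : 0 ≤ r)
    (hTQ : T ^ 2 ≤ Q * (2 * D - Q)) (hcoarea : D + p ≤ r + (1 + a) * (T + p)) :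
    (1 - t) * (D + p) ≤ Q + p + r / (t * (1 + a) ^ 2) := by
  set b := t * (1 + a)
  have hb : 0 < b := by positivity
  have key := sub_le_of_sq_le_mul ha hb hat hD (w := a * p / b + r / b) (by positivity) hTQ
    (by rw [← add_div, mul_div_cancel₀ _ hb.ne']; linarith)
  have hap : a * p / b ≤ b * p := by
    rw [div_le_iff₀ hb]
    nlinarith
  have hr' : r / (t * (1 + a) ^ 2) * (1 + a) = r / b := by
    field_simp
    ring
  nlinarith

section Sparse

variable {V : Type*} [DecidableEq V] {G : SimpleGraph V} [DecidableRel G.Adj] [G.LocallyFinite]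

theorem sum_degree_eq_edgesTwice_add_bdryCard (A : Finset V) :
    ∑ x ∈ A, G.degree x = edgesTwice G A + bdryCard G A := by
  rw [edgesTwice, bdryCard, card_filter, sum_product, ← sum_add_distrib]
  refine sum_congr rfl fun x _ => ?_
  rw [← G.card_neighborFinset_eq_degree, ← card_filter_add_card_filter_not (· ∈ A), ← card_filter]
  congr 2
  ext y
  simp [and_comm]

theorem IsSparse.sum_degree_add_le {q : V → ℝ} {a k : ℝ} (hs : IsSparse G q a k)
    (A : Finset V) :
    ∑ x ∈ A, ((G.degree x : ℝ) + max (q x) 0) ≤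
      (1 + a) * bdryCard G A + ∑ x ∈ A, (k + (1 + a) * max (q x) 0) := by
  have hdeg : ∑ x ∈ A, (G.degree x : ℝ) = edgesTwice G A + bdryCard G A := by
    exact_mod_cast sum_degree_eq_edgesTwice_add_bdryCard A
  rw [sum_add_distrib, sum_add_distrib, hdeg, ← mul_sum, sum_const, nsmul_eq_mul]
  linarith [hs A]

theorem IsSparse.qDeg_add_qPot_le {q : V → ℝ} {a k t : ℝ} (hs : IsSparse G q a k) (ha : 0 ≤ a)
    (hk : 0 ≤ k) (ht : 0 < t) (hat : 2 * a + a ^ 2 ≤ (t * (1 + a)) ^ 2) {f : V → ℂ}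
    (hf : (Function.support f).Finite) :
    (1 - t) * (qDeg G f + qPot (fun x => max (q x) 0) f) ≤
      qLap G (modulus f) + qPot (fun x => max (q x) 0) f + k / (t * (1 + a) ^ 2) * qNormSq f := by
  obtain ⟨S, hS⟩ := exists_isNbhdOfSupport (G := G) hf
  set T := ∑ p ∈ edgePairs G S, max (‖f p.1‖ ^ 2 - ‖f p.2‖ ^ 2) 0
  have hD : qDeg G f = ∑ x ∈ S, (G.degree x : ℝ) * ‖f x‖ ^ 2 := hS.tsum_eq_sum (by simp_all)
  have hp : qPot (fun x => max (q x) 0) f = ∑ x ∈ S, max (q x) 0 * ‖f x‖ ^ 2 :=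
    hS.tsum_eq_sum (by simp_all)
  have hn : qNormSq f = ∑ x ∈ S, ‖f x‖ ^ 2 := hS.tsum_eq_sum (by simp_all)
  have hcoarea : qDeg G f + qPot (fun x => max (q x) 0) f ≤
      k * qNormSq f + (1 + a) * (T + qPot (fun x => max (q x) 0) f) := by
    have h := sum_mul_le_of_forall_subset (fun A _ => hs.sum_degree_add_le A)
      (v := fun x => ‖f x‖ ^ 2) (fun x => by positivity) fun x hx => by
        simpa using fun h => hx (hS x h).1
    rw [sum_sum_neighborFinset_eq_sum_edgePairs fun x _ y hxy h =>
      (hS x fun h0 => h (by simp [h0])).2 y hxy] at h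
    simp only [add_mul, sum_add_distrib, mul_assoc, ← mul_sum] at h
    rw [hD, hp, hn]
    linarith
  have hCS : T ^ 2 ≤ qLap G (modulus f) * (2 * qDeg G f - qLap G (modulus f)) := by
    rw [← qDeg_modulus, ← qLap_add_qSignless (by rwa [support_modulus])]
    simpa using hS.sq_sum_posPart_le
  have hD0 : 0 ≤ qDeg G f := by rw [hD]; positivity
  have hp0 : 0 ≤ qPot (fun x => max (q x) 0) f := by
    rw [hp]; exact sum_nonneg fun x _ => by positivity
  have hn0 : 0 ≤ qNormSq f := by rw [hn]; positivity
  have h := one_sub_mul_le_of_sq_le_mul ha ht hat hD0 hp0 (mul_nonneg hk hn0) hCS (by linarith)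
  rwa [mul_div_right_comm] at h

end Sparse

section Classes

variable {V : Type*} {G : SimpleGraph V} [DecidableRel G.Adj] [G.LocallyFinite] {q : V → ℝ}

theorem KClass.kClassTheta {β : ℝ} (h : KClass G q β) (hβ : 0 ≤ β) (θ : V → V → ℝ) :
    KClassTheta G θ q β := by
  obtain ⟨C, hC0, hC⟩ := h
  refine ⟨C, hC0, fun f hf => ?_⟩
  calc qPot (fun x => max (-q x) 0) f
      ≤ β * (qLap G (modulus f) + qPot (fun x => max (q x) 0) f) + C * qNormSq f := by
        simpa using hC (modulus f) (by rwa [support_modulus])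
    _ ≤ β * (qMag G θ f + qPot (fun x => max (q x) 0) f) + C * qNormSq f := by
        gcongr
        exact qLap_modulus_le_qMag hf θ

theorem KClassTheta.kClass [DecidableEq V] {θ : V → V → ℝ} {a k t α : ℝ}
    (h : KClassTheta G θ q α) (hs : IsSparse G q a k) (ha : 0 ≤ a) (hk : 0 ≤ k) (hα : 0 ≤ α)
    (ht : 0 < t) (ht1 : t < 1) (hat : 2 * a + a ^ 2 ≤ (t * (1 + a)) ^ 2) :
    KClass G q (α * (1 + t) / (1 - t)) := by
  obtain ⟨C, hC0, hC⟩ := h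
  have h1t : 0 < 1 - t := sub_pos.2 ht1
  set K := k / (t * (1 + a) ^ 2)
  refine ⟨C + 2 * α * K / (1 - t), by positivity, fun f hf => ?_⟩
  set P := qPot (fun x => max (q x) 0) f
  have hfm : (Function.support (modulus f)).Finite := by rwa [support_modulus]
  have hmag : qMag G θ (modulus f) ≤ 2 * qDeg G f - qLap G (modulus f) := by
    rw [← qDeg_modulus, ← qLap_add_qSignless hfm]
    linarith [qMag_modulus_le_qSignless (G := G) hf θ]
  have hlap : qLap G (modulus f) ≤ qLap G f := by
    simpa [qMag_zero] using qLap_modulus_le_qMag (G := G) hf fun _ _ => 0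
  have hdeg := hs.qDeg_add_qPot_le ha hk ht hat hf
  have hbound : (1 - t) * (qMag G θ (modulus f) + P) ≤
      (1 + t) * (qLap G f + P) + 2 * K * qNormSq f := by
    nlinarith [mul_le_mul_of_nonneg_left hmag h1t.le,
      mul_le_mul_of_nonneg_left hlap (by linarith : (0 : ℝ) ≤ 1 + t)]
  calc qPot (fun x => max (-q x) 0) f
      ≤ α * (qMag G θ (modulus f) + P) + C * qNormSq f := by
        simpa using hC (modulus f) hfm
    _ ≤ α * (((1 + t) * (qLap G f + P) + 2 * K * qNormSq f) / (1 - t)) + C * qNormSq f := by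
        gcongr
        rwa [le_div_iff₀ h1t, mul_comm]
    _ = α * (1 + t) / (1 - t) * (qLap G f + P) + (C + 2 * α * K / (1 - t)) * qNormSq f := by
        field_simp
        ring

end Classes

theorem sqrt_div_one_add_bounds {a m t : ℝ} (ha : 0 < a) (hm : 0 ≤ m) (hm1 : m < 1)
    (ht : t = √(m + 2 * a + a ^ 2) / (1 + a)) :
    0 < t ∧ t < 1 ∧ 2 * a + a ^ 2 ≤ (t * (1 + a)) ^ 2 := by
  have h1a : 0 < 1 + a := by linarith
  have hsq : (t * (1 + a)) ^ 2 = m + 2 * a + a ^ 2 := by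
    rw [ht, div_mul_cancel₀ _ h1a.ne', Real.sq_sqrt (by positivity)]
  refine ⟨by rw [ht]; positivity, ?_, by linarith⟩
  rw [ht, div_lt_one h1a, Real.sqrt_lt' h1a]
  nlinarith

variable {V : Type*} [DecidableEq V] (G : SimpleGraph V) [DecidableRel G.Adj] [G.LocallyFinite]

theorem stmt11 (q : V → ℝ) (a k : ℝ) (ha : 0 < a) (hk : 0 ≤ k)
    (hsparse : IsSparse G q a k)
    (θ : V → V → ℝ) (α : ℝ) (hα : 0 < α) :
    ∀ ta : ℝ, ta = Real.sqrt (min (1 / 4) (a ^ 2) + 2 * a + a ^ 2) / (1 + a) →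
      (KClassTheta G θ q α → KClass G q (α * (1 + ta) / (1 - ta))) ∧
      ((∀ β : ℝ, 0 < β → β < 1 → KClassTheta G θ q β) ↔
        (∀ β : ℝ, 0 < β → β < 1 → KClass G q β)) := by
  intro ta hta
  obtain ⟨ht, ht1, hat⟩ := sqrt_div_one_add_bounds ha (by positivity)
    ((min_le_left _ _).trans_lt (by norm_num)) hta
  have hmag {β : ℝ} (hβ : 0 ≤ β) (h : KClassTheta G θ q β) :
      KClass G q (β * (1 + ta) / (1 - ta)) :=
    h.kClass hsparse ha.le hk hβ ht ht1 hat
  refine ⟨hmag hα.le, fun h β hβ hβ1 => ?_, fun h β hβ hβ1 => (h β hβ hβ1).kClassTheta hβ.le θ⟩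
  have hβ' : 0 < β * (1 - ta) / (1 + ta) := by
    have : 0 < 1 - ta := sub_pos.2 ht1
    positivity
  have hβ'1 : β * (1 - ta) / (1 + ta) < 1 := by
    rw [div_lt_one (by linarith)]
    nlinarith
  have hscale : β * (1 - ta) / (1 + ta) * (1 + ta) / (1 - ta) = β := by
    field_simp [(sub_pos.2 ht1).ne']
  simpa only [hscale] using hmag hβ'.le (h _ hβ' hβ'1)
end

section
/- Let G = (V,E) be a locally finite graph and q : V → [0,∞), and assume α_∞ > 0. Then for every ε > 0 there is k_ε ≥ 0 such that for all finitely supported f : V → ℂ, (1−ε)(1 − √(1 − α_∞²))·(Q_deg(f) + Q_q(f)) − k_ε·‖f‖² ≤ Q_Δ(f) + Q_q(f) ≤ (1+ε)(1 + √(1 − α_∞²))·(Q_deg(f) + Q_q(f)) + k_ε·‖f‖². -/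
/-!
Away from a large finite set `K` the graph satisfies an isoperimetric inequality
`c (deg + q)(W) ≤ |∂W| + q(W)` with `c` as close to `α_∞` as we like. For `f` supported off `K`
and `g = |f|`, the discrete co-area formula (peeling `g²` into level sets) turns this into
`c (Q_deg + Q_q)(f) ≤ ½ ∑ |g(x)² - g(y)²| + Q_q(g²)`, and Cauchy–Schwarz bounds the right-hand
side by the geometric mean of `½ ∑ (g(x) - g(y))² + Q_q(g²)` and `½ ∑ (g(x) + g(y))² + Q_q(g²)`.
These two quantities sum to `2 (Q_deg + Q_q)(f)` and bracket `Q_Δ(f) + Q_q(f)`, so solving the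
quadratic inequality gives `|Q_Δ(f) + Q_q(f) - (Q_deg + Q_q)(f)| ≤ √(1 - c²) (Q_deg + Q_q)(f)`.
A general `f` is split into its parts on and off `K`: the part on `K` costs a multiple of `‖f‖²`,
and the cross terms of `Q_Δ` are absorbed by `‖a + b‖² ≤ (1 + δ)‖a‖² + (1 + δ⁻¹)‖b‖²`.
-/

open scoped BigOperators

noncomputable section

variable {V : Type*} [DecidableEq V] (G : SimpleGraph V) [DecidableRel G.Adj]

variable [G.LocallyFinite]

open Finset Function Topology

section

omit [DecidableRel G.Adj]

omit [DecidableEq V] in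
def Encloses (T : Finset V) (s : Set V) : Prop :=
  ∀ x ∈ s, x ∈ T ∧ G.neighborFinset x ⊆ T

omit [DecidableEq V] in
lemma Encloses.mono {T : Finset V} {s t : Set V} (h : Encloses G T t) (hst : s ⊆ t) :
    Encloses G T s :=
  fun x hx => h x (hst hx)

lemma exists_encloses {s : Set V} (hs : s.Finite) : ∃ T : Finset V, Encloses G T s := by
  refine ⟨hs.toFinset ∪ hs.toFinset.biUnion fun x => G.neighborFinset x,
    fun x hx => ⟨?_, fun y hy => ?_⟩⟩
  · exact mem_union_left _ (hs.mem_toFinset.2 hx)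
  · exact mem_union_right _ (mem_biUnion.2 ⟨x, hs.mem_toFinset.2 hx, hy⟩)

lemma sum_sum_neighborFinset_swap {T : Finset V} (F : V → V → ℝ)
    (hF : ∀ x y, G.Adj x y → F x y ≠ 0 → x ∈ T ∧ y ∈ T) :
    ∑ x ∈ T, ∑ y ∈ G.neighborFinset x, F x y = ∑ x ∈ T, ∑ y ∈ G.neighborFinset x, F y x := by
  have restrict : ∀ H : V → V → ℝ, (∀ x y, G.Adj x y → H x y ≠ 0 → y ∈ T) → ∀ x,
      ∑ y ∈ G.neighborFinset x with y ∈ T, H x y = ∑ y ∈ G.neighborFinset x, H x y :=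
    fun H hH x => sum_filter_of_ne fun y hy hne => hH x y ((G.mem_neighborFinset x y).1 hy) hne
  rw [← sum_congr rfl fun x _ => restrict F (fun x y h hne => (hF x y h hne).2) x,
    ← sum_congr rfl fun x _ =>
      restrict (fun x y => F y x) (fun x y h hne => (hF y x h.symm hne).1) x]
  exact sum_comm' fun x y => by
    simp only [mem_filter, SimpleGraph.mem_neighborFinset, G.adj_comm]; tauto

lemma sum_sum_neighborFinset_add {T : Finset V} (h : V → ℝ) (hT : Encloses G T (support h)) :
    ∑ x ∈ T, ∑ y ∈ G.neighborFinset x, (h x + h y) = 2 * ∑ x ∈ T, (G.degree x : ℝ) * h x := by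
  have hswap := sum_sum_neighborFinset_swap G (fun _ y => h y) fun x y hxy hy =>
    ⟨(hT y hy).2 ((G.mem_neighborFinset y x).2 hxy.symm), (hT y hy).1⟩
  simp only [sum_add_distrib, hswap, sum_const, G.card_neighborFinset_eq_degree, nsmul_eq_mul]
  ring

lemma sum_sum_neighborFinset_abs_sub_indicator {T W : Finset V} (hT : Encloses G T W) :
    ∑ x ∈ T, ∑ y ∈ G.neighborFinset x,
        |(if x ∈ W then (1 : ℝ) else 0) - if y ∈ W then 1 else 0| = 2 * bdryCard G W := by
  set a : V → V → ℝ := fun x y => if x ∈ W ∧ y ∉ W then 1 else 0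
  have hsplit : ∀ x y,
      |(if x ∈ W then (1 : ℝ) else 0) - if y ∈ W then 1 else 0| = a x y + a y x := by
    intro x y; simp only [a]; split_ifs <;> simp_all
  have hswap := sum_sum_neighborFinset_swap G a fun x y hxy hne => by
    have hx : x ∈ W := by by_contra h; simp [a, h] at hne
    exact ⟨(hT x hx).1, (hT x hx).2 ((G.mem_neighborFinset x y).2 hxy)⟩
  have hrow : ∀ x, ∑ y ∈ G.neighborFinset x, a x y
      = if x ∈ W then (#{y ∈ G.neighborFinset x | y ∉ W} : ℝ) else 0 := by
    intro x; split_ifs with hx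
    · simp only [a, hx, true_and, sum_boole]
    · simp [a, hx]
  have hWT : T ∩ W = W := inter_eq_right.2 fun x hx => (hT x hx).1
  simp only [hsplit, sum_add_distrib, ← hswap, hrow, sum_ite_mem, hWT, bdryCard, Nat.cast_sum]
  ring

lemma sum_sum_abs_sub_add_indicator {T W : Finset V} (hT : Encloses G T W) {h : V → ℝ}
    (hh : 0 ≤ h) (hhW : ∀ x ∉ W, h x = 0) {m : ℝ} (hm : 0 ≤ m) :
    ∑ x ∈ T, ∑ y ∈ G.neighborFinset x,
        |h x + m * (if x ∈ W then 1 else 0) - (h y + m * if y ∈ W then 1 else 0)|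
      = m * (2 * bdryCard G W) + ∑ x ∈ T, ∑ y ∈ G.neighborFinset x, |h x - h y| := by
  rw [← sum_sum_neighborFinset_abs_sub_indicator G hT, mul_sum, ← sum_add_distrib]
  refine sum_congr rfl fun x _ => ?_
  rw [mul_sum, ← sum_add_distrib]
  refine sum_congr rfl fun y _ => ?_
  by_cases hx : x ∈ W <;> by_cases hy : y ∈ W
  · simp [hx, hy]
  · simp [hx, hy, hhW y hy, abs_of_nonneg (add_nonneg (hh x) hm), abs_of_nonneg (hh x)]; ring
  · rw [abs_sub_comm]
    simp [hx, hy, hhW x hx, abs_of_nonneg (add_nonneg (hh y) hm), abs_of_nonneg (hh y)]; ring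
  · simp [hx, hy, hhW x hx, hhW y hy]

def IsoperimetricOn (q : V → ℝ) (U : Set V) (c : ℝ) : Prop :=
  ∀ W : Finset V, ↑W ⊆ U → W.Nonempty →
    c * ∑ x ∈ W, ((G.degree x : ℝ) + q x) ≤ bdryCard G W + ∑ x ∈ W, q x

lemma isoperimetricOn_of_le_cheeger {q : V → ℝ} (hq : ∀ x, 0 ≤ q x) {U : Set V} {c : ℝ}
    (hc : c ≤ cheeger G q U) : IsoperimetricOn G q U c := by
  intro W hWU hW
  have hden : 0 ≤ ∑ x ∈ W, ((G.degree x : ℝ) + q x) :=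
    sum_nonneg fun x _ => add_nonneg (Nat.cast_nonneg _) (hq x)
  have hnum : (0 : ℝ) ≤ bdryCard G W + ∑ x ∈ W, q x :=
    add_nonneg (Nat.cast_nonneg _) (sum_nonneg fun x _ => hq x)
  have hle := hc.trans <| ciInf_le ⟨0, by
    rintro _ ⟨W', rfl⟩
    dsimp only
    split_ifs
    · exact le_rfl
    · exact div_nonneg (add_nonneg (Nat.cast_nonneg _) (sum_nonneg fun x _ => hq x))
        (sum_nonneg fun x _ => add_nonneg (Nat.cast_nonneg _) (hq x))⟩ ⟨W, hWU, hW⟩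
  rcases hden.eq_or_lt with h | h
  · rw [← h, mul_zero]; exact hnum
  · rw [if_neg h.ne'] at hle
    exact (le_div_iff₀ h).1 hle

lemma coarea_le_add_indicator {q : V → ℝ} {U : Set V} {c : ℝ} (hC : IsoperimetricOn G q U c)
    {T W : Finset V} (hT : Encloses G T W) (hWU : ↑W ⊆ U) (hW : W.Nonempty) {h : V → ℝ}
    (hh : 0 ≤ h) (hhW : ∀ x ∉ W, h x = 0) {m : ℝ} (hm : 0 ≤ m)
    (H : c * ∑ x ∈ T, ((G.degree x : ℝ) + q x) * h x ≤
      1 / 2 * ∑ x ∈ T, ∑ y ∈ G.neighborFinset x, |h x - h y| + ∑ x ∈ T, q x * h x) :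
    c * ∑ x ∈ T, ((G.degree x : ℝ) + q x) * (h x + m * if x ∈ W then 1 else 0) ≤
      1 / 2 * ∑ x ∈ T, ∑ y ∈ G.neighborFinset x,
          |h x + m * (if x ∈ W then 1 else 0) - (h y + m * if y ∈ W then 1 else 0)|
        + ∑ x ∈ T, q x * (h x + m * if x ∈ W then 1 else 0) := by
  have hWT : T ∩ W = W := inter_eq_right.2 fun x hx => (hT x hx).1
  have hsum : ∀ w : V → ℝ, ∑ x ∈ T, w x * (h x + m * if x ∈ W then 1 else 0)
      = ∑ x ∈ T, w x * h x + m * ∑ x ∈ W, w x := by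
    intro w
    simp only [mul_add, sum_add_distrib, mul_ite, mul_one, mul_zero, sum_ite_mem, hWT, mul_sum]
    exact congrArg _ (sum_congr rfl fun x _ => mul_comm _ _)
  rw [hsum (fun x => (G.degree x : ℝ) + q x), hsum q, sum_sum_abs_sub_add_indicator G hT hh hhW hm]
  linear_combination H + m * hC W hWU hW

theorem coarea_le {q : V → ℝ} {U : Set V} {c : ℝ} (hC : IsoperimetricOn G q U c)
    {T : Finset V} {g : V → ℝ} (hg : 0 ≤ g) (hgU : support g ⊆ U)
    (hT : Encloses G T (support g)) :
    c * ∑ x ∈ T, ((G.degree x : ℝ) + q x) * g x ≤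
      1 / 2 * ∑ x ∈ T, ∑ y ∈ G.neighborFinset x, |g x - g y| + ∑ x ∈ T, q x * g x := by
  induction hn : #{x ∈ T | g x ≠ 0} using Nat.strong_induction_on generalizing g with
  | _ n ih =>
  set W := {x ∈ T | g x ≠ 0}
  have memW : ∀ x, x ∈ W ↔ g x ≠ 0 := fun x => by
    simpa [W] using fun h => (hT x h).1
  rcases W.eq_empty_or_nonempty with hW | hW
  · have : g = 0 := funext fun x => by simpa [hW] using memW x
    simp [this]
  -- peel off the lowest layer `m • 1_W`, where `m` is the least nonzero value of `g`
  obtain ⟨x₀, hx₀, hmin⟩ := W.exists_min_image g hW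
  set m := g x₀
  set g' : V → ℝ := fun x => g x - m * if x ∈ W then 1 else 0
  have hg'W : ∀ x ∉ W, g' x = 0 := fun x hx => by simp [g', hx, (memW x).not_left.1 hx]
  have hg' : 0 ≤ g' := fun x => by
    by_cases hx : x ∈ W
    · simpa [g', hx] using hmin x hx
    · exact (hg'W x hx).ge
  have hcard : #{x ∈ T | g' x ≠ 0} < n := by
    refine hn ▸ (card_le_card fun x hx => ?_).trans_lt (card_erase_lt_of_mem hx₀)
    have hxW : x ∈ W := by_contra fun h => (mem_filter.1 hx).2 (hg'W x h)
    refine mem_erase.2 ⟨fun h => (mem_filter.1 hx).2 ?_, hxW⟩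
    simp [g', h, hx₀, m]
  have hsupp' : support g' ⊆ support g := fun x h => (memW x).1 (by_contra fun hx => h (hg'W x hx))
  have ih' := ih _ hcard hg' (hsupp'.trans hgU) (hT.mono G hsupp') rfl
  have hm : 0 ≤ m := hg x₀
  simpa only [g', sub_add_cancel] using coarea_le_add_indicator G hC
    (hT.mono G fun x hx => (memW x).1 hx) (fun x hx => hgU ((memW x).1 hx)) hW hg' hg'W hm ih'

omit [DecidableEq V] in
lemma sq_sum_abs_sq_sub_sq_le {q : V → ℝ} (hq : ∀ x, 0 ≤ q x) (T : Finset V) (g : V → ℝ) :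
    (1 / 2 * ∑ x ∈ T, ∑ y ∈ G.neighborFinset x, |g x ^ 2 - g y ^ 2| + ∑ x ∈ T, q x * g x ^ 2) ^ 2
      ≤ (1 / 2 * ∑ x ∈ T, ∑ y ∈ G.neighborFinset x, (g x - g y) ^ 2 + ∑ x ∈ T, q x * g x ^ 2) *
        (1 / 2 * ∑ x ∈ T, ∑ y ∈ G.neighborFinset x, (g x + g y) ^ 2 + ∑ x ∈ T, q x * g x ^ 2) := by
  have h := sum_sq_le_sum_mul_sum_of_sq_le_mul ((T.sigma fun x => G.neighborFinset x).disjSum T)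
    (r := Sum.elim (fun p => 1 / 2 * |g p.1 ^ 2 - g p.2 ^ 2|) fun x => q x * g x ^ 2)
    (f := Sum.elim (fun p => 1 / 2 * (g p.1 - g p.2) ^ 2) fun x => q x * g x ^ 2)
    (g := Sum.elim (fun p => 1 / 2 * (g p.1 + g p.2) ^ 2) fun x => q x * g x ^ 2)
    (by rintro (p | x) _ <;> simp only [Sum.elim_inl, Sum.elim_inr]
        exacts [by positivity, mul_nonneg (hq x) (sq_nonneg _)])
    (by rintro (p | x) _ <;> simp only [Sum.elim_inl, Sum.elim_inr]
        exacts [by positivity, mul_nonneg (hq x) (sq_nonneg _)])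
    (by
      rintro (p | x) _ <;> simp only [Sum.elim_inl, Sum.elim_inr]
      · rw [mul_pow, sq_abs]; exact le_of_eq (by ring)
      · exact le_of_eq (by ring))
  simpa only [sum_disjSum, sum_sigma, mul_sum, Sum.elim_inl, Sum.elim_inr] using h

lemma abs_sub_le_sqrt_one_sub_sq_mul {c d e A : ℝ} (hc : 0 ≤ c) (hd : 0 ≤ d) (hA : c * d ≤ A)
    (hA2 : A ^ 2 ≤ e * (2 * d - e)) : |e - d| ≤ √(1 - c ^ 2) * d := by
  have hsq : (e - d) ^ 2 ≤ (1 - c ^ 2) * d ^ 2 := by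
    nlinarith [pow_le_pow_left₀ (mul_nonneg hc hd) hA 2]
  calc |e - d| = √((e - d) ^ 2) := (Real.sqrt_sq_eq_abs _).symm
    _ ≤ √((1 - c ^ 2) * d ^ 2) := Real.sqrt_le_sqrt hsq
    _ = √(1 - c ^ 2) * d := by rw [Real.sqrt_mul' _ (sq_nonneg d), Real.sqrt_sq hd]

lemma sum_bounds_of_isoperimetricOn {q : V → ℝ} (hq : ∀ x, 0 ≤ q x) {U : Set V} {c : ℝ}
    (hc : 0 ≤ c) (hC : IsoperimetricOn G q U c) {T : Finset V} {g : V → ℝ}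
    (hgU : support g ⊆ U) (hT : Encloses G T (support g)) :
    (1 - √(1 - c ^ 2)) * ∑ x ∈ T, ((G.degree x : ℝ) + q x) * g x ^ 2
        ≤ 1 / 2 * ∑ x ∈ T, ∑ y ∈ G.neighborFinset x, (g x - g y) ^ 2 + ∑ x ∈ T, q x * g x ^ 2 ∧
      1 / 2 * ∑ x ∈ T, ∑ y ∈ G.neighborFinset x, (g x + g y) ^ 2 + ∑ x ∈ T, q x * g x ^ 2
        ≤ (1 + √(1 - c ^ 2)) * ∑ x ∈ T, ((G.degree x : ℝ) + q x) * g x ^ 2 := by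
  have hsupp : support (fun x => g x ^ 2) = support g := by ext; simp
  have hcoarea := coarea_le G hC (g := fun x => g x ^ 2) (fun x => sq_nonneg _) (hsupp ▸ hgU)
    (hsupp ▸ hT)
  have hpar : ∑ x ∈ T, ∑ y ∈ G.neighborFinset x, (g x + g y) ^ 2
      + ∑ x ∈ T, ∑ y ∈ G.neighborFinset x, (g x - g y) ^ 2
      = 4 * ∑ x ∈ T, (G.degree x : ℝ) * g x ^ 2 := by
    calc _ = 2 * ∑ x ∈ T, ∑ y ∈ G.neighborFinset x, (g x ^ 2 + g y ^ 2) := by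
          simp only [mul_sum, ← sum_add_distrib]
          exact sum_congr rfl fun x _ => sum_congr rfl fun y _ => by ring
      _ = _ := by rw [sum_sum_neighborFinset_add G (fun x => g x ^ 2) (hsupp ▸ hT)]; ring
  have hsplit : ∑ x ∈ T, ((G.degree x : ℝ) + q x) * g x ^ 2
      = ∑ x ∈ T, (G.degree x : ℝ) * g x ^ 2 + ∑ x ∈ T, q x * g x ^ 2 := by
    simp only [add_mul, sum_add_distrib]
  have hCS := sq_sum_abs_sq_sub_sq_le G hq T g
  rw [show 1 / 2 * ∑ x ∈ T, ∑ y ∈ G.neighborFinset x, (g x + g y) ^ 2 + ∑ x ∈ T, q x * g x ^ 2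
      = 2 * ∑ x ∈ T, ((G.degree x : ℝ) + q x) * g x ^ 2
        - (1 / 2 * ∑ x ∈ T, ∑ y ∈ G.neighborFinset x, (g x - g y) ^ 2 + ∑ x ∈ T, q x * g x ^ 2)
      by rw [hsplit]; linarith] at hCS ⊢
  have hd : 0 ≤ ∑ x ∈ T, ((G.degree x : ℝ) + q x) * g x ^ 2 :=
    sum_nonneg fun x _ => mul_nonneg (add_nonneg (Nat.cast_nonneg _) (hq x)) (sq_nonneg _)
  have habs := abs_le.1 (abs_sub_le_sqrt_one_sub_sq_mul hc hd hcoarea hCS)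
  constructor <;> linarith [habs.1, habs.2]

end

section

omit [DecidableEq V] [DecidableRel G.Adj]

variable {f : V → ℂ} {T : Finset V}

lemma qPot_eq_sum (w : V → ℝ) (hT : support f ⊆ T) : qPot w f = ∑ x ∈ T, w x * ‖f x‖ ^ 2 :=
  tsum_eq_sum fun x hx => by simp [notMem_support.1 fun h => hx (hT h)]

lemma qNormSq_eq_sum (hT : support f ⊆ T) : qNormSq f = ∑ x ∈ T, ‖f x‖ ^ 2 :=
  tsum_eq_sum fun x hx => by simp [notMem_support.1 fun h => hx (hT h)]

lemma qPot_nonneg {w : V → ℝ} (hw : ∀ x, 0 ≤ w x) : 0 ≤ qPot w f :=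
  tsum_nonneg fun x => mul_nonneg (hw x) (sq_nonneg _)

lemma qNormSq_nonneg : 0 ≤ qNormSq f := tsum_nonneg fun _ => sq_nonneg _

lemma qPot_indicator_add_compl (w : V → ℝ) (s : Set V) (hf : (support f).Finite) :
    qPot w f = qPot w (s.indicator f) + qPot w (sᶜ.indicator f) := by
  have hT : support f ⊆ hf.toFinset := hf.coe_toFinset.ge
  rw [qPot_eq_sum w hT, qPot_eq_sum w fun x hx => hT (Set.indicator_apply_ne_zero.1 hx).2,
    qPot_eq_sum w fun x hx => hT (Set.indicator_apply_ne_zero.1 hx).2, ← sum_add_distrib]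
  refine sum_congr rfl fun x _ => ?_
  by_cases hx : x ∈ s <;> simp [hx]

lemma qPot_indicator_le {w : V → ℝ} {s : Set V} {C : ℝ} (hC : 0 ≤ C) (hw : ∀ x ∈ s, w x ≤ C)
    (hf : (support f).Finite) : qPot w (s.indicator f) ≤ C * qNormSq f := by
  have hT : support f ⊆ hf.toFinset := hf.coe_toFinset.ge
  rw [qPot_eq_sum w fun x hx => hT (Set.indicator_apply_ne_zero.1 hx).2, qNormSq_eq_sum hT,
    mul_sum]
  refine sum_le_sum fun x _ => ?_
  by_cases hx : x ∈ s
  · simpa [hx] using mul_le_mul_of_nonneg_right (hw x hx) (sq_nonneg ‖f x‖)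
  · simpa [hx] using mul_nonneg hC (sq_nonneg ‖f x‖)

lemma qDeg_eq_qPot : qDeg G f = qPot (fun x => (G.degree x : ℝ)) f := rfl

lemma qDeg_add_qPot (q : V → ℝ) (hf : (support f).Finite) :
    qDeg G f + qPot q f = qPot (fun x => G.degree x + q x) f := by
  rw [qDeg_eq_qPot, qPot_eq_sum _ hf.coe_toFinset.ge, qPot_eq_sum _ hf.coe_toFinset.ge,
    qPot_eq_sum _ hf.coe_toFinset.ge, ← sum_add_distrib]
  simp only [add_mul]

end

section

variable {f : V → ℂ}

omit [DecidableEq V] in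
lemma qLap_eq_sum {T : Finset V} (hT : Encloses G T (support f)) :
    qLap G f = 1 / 2 * ∑ x ∈ T, ∑ y ∈ G.neighborFinset x, ‖f x - f y‖ ^ 2 := by
  have hrow : ∀ x, (∑' y, if G.Adj x y then ‖f x - f y‖ ^ 2 else 0)
      = ∑ y ∈ G.neighborFinset x, ‖f x - f y‖ ^ 2 := by
    intro x
    rw [tsum_eq_sum (s := G.neighborFinset x) fun y hy => if_neg (by simpa using hy)]
    exact sum_congr rfl fun y hy => if_pos (by simpa using hy)
  rw [qLap, tsum_congr hrow, tsum_eq_sum fun x hx => sum_eq_zero fun y hy => ?_]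
  have hfx : f x = 0 := notMem_support.1 fun h => hx (hT x h).1
  have hfy : f y = 0 := notMem_support.1 fun h =>
    hx ((hT y h).2 ((G.mem_neighborFinset y x).2 ((G.mem_neighborFinset x y).1 hy).symm))
  simp [hfx, hfy]

omit [DecidableEq V] [G.LocallyFinite] in
lemma qLap_nonneg : 0 ≤ qLap G f :=
  mul_nonneg (by norm_num) (tsum_nonneg fun _ => tsum_nonneg fun _ => by split_ifs <;> positivity)

omit [DecidableEq V] [G.LocallyFinite] in
lemma qLap_neg : qLap G (-f) = qLap G f := by
  simp only [qLap, Pi.neg_apply, neg_sub_neg, norm_sub_rev]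

lemma norm_add_sq_le {δ : ℝ} (hδ : 0 < δ) (a b : ℂ) :
    ‖a + b‖ ^ 2 ≤ (1 + δ) * ‖a‖ ^ 2 + (1 + δ⁻¹) * ‖b‖ ^ 2 := by
  have hyoung : 2 * ‖a‖ * ‖b‖ ≤ δ * ‖a‖ ^ 2 + δ⁻¹ * ‖b‖ ^ 2 := by
    have := sq_nonneg (δ * ‖a‖ - ‖b‖)
    have hδ' : δ * δ⁻¹ = 1 := mul_inv_cancel₀ hδ.ne'
    nlinarith [inv_pos.2 hδ]
  nlinarith [norm_add_le a b, norm_nonneg (a + b), norm_nonneg a, norm_nonneg b]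

lemma qLap_add_le {h : V → ℂ} (hf : (support f).Finite) (hh : (support h).Finite) {δ : ℝ}
    (hδ : 0 < δ) : qLap G (f + h) ≤ (1 + δ) * qLap G f + (1 + δ⁻¹) * qLap G h := by
  obtain ⟨T, hT⟩ := exists_encloses G (hf.union hh)
  rw [qLap_eq_sum G (f := f + h) (hT.mono G (support_add f h)),
    qLap_eq_sum G (hT.mono G Set.subset_union_left),
    qLap_eq_sum G (hT.mono G Set.subset_union_right)]
  have key : ∑ x ∈ T, ∑ y ∈ G.neighborFinset x, ‖(f + h) x - (f + h) y‖ ^ 2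
      ≤ (1 + δ) * ∑ x ∈ T, ∑ y ∈ G.neighborFinset x, ‖f x - f y‖ ^ 2
        + (1 + δ⁻¹) * ∑ x ∈ T, ∑ y ∈ G.neighborFinset x, ‖h x - h y‖ ^ 2 := by
    simp only [mul_sum, ← sum_add_distrib]
    gcongr with x _ y _
    simpa only [Pi.add_apply, add_sub_add_comm] using norm_add_sq_le hδ (f x - f y) (h x - h y)
  linear_combination 1 / 2 * key

lemma qLap_le_two_mul_qDeg (hf : (support f).Finite) : qLap G f ≤ 2 * qDeg G f := by
  obtain ⟨T, hT⟩ := exists_encloses G hf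
  have hsupp : support (fun x => ‖f x‖ ^ 2) = support f := by ext x; simp
  rw [qLap_eq_sum G hT, qDeg_eq_qPot, qPot_eq_sum _ fun x hx => (hT x hx).1]
  calc 1 / 2 * ∑ x ∈ T, ∑ y ∈ G.neighborFinset x, ‖f x - f y‖ ^ 2
      ≤ 1 / 2 * ∑ x ∈ T, ∑ y ∈ G.neighborFinset x, 2 * (‖f x‖ ^ 2 + ‖f y‖ ^ 2) := by
        gcongr with x _ y _
        exact (pow_le_pow_left₀ (norm_nonneg _) (norm_sub_le _ _) 2).trans add_sq_le
    _ = 2 * ∑ x ∈ T, (G.degree x : ℝ) * ‖f x‖ ^ 2 := by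
        simp only [← mul_sum, sum_sum_neighborFinset_add G _ (hsupp ▸ hT)]
        ring

end

theorem qLap_add_qPot_bounds_of_isoperimetricOn {q : V → ℝ} (hq : ∀ x, 0 ≤ q x) {U : Set V}
    {c : ℝ} (hc : 0 ≤ c) (hC : IsoperimetricOn G q U c) {f : V → ℂ} (hf : (support f).Finite)
    (hfU : support f ⊆ U) :
    (1 - √(1 - c ^ 2)) * (qDeg G f + qPot q f) ≤ qLap G f + qPot q f ∧
      qLap G f + qPot q f ≤ (1 + √(1 - c ^ 2)) * (qDeg G f + qPot q f) := by
  obtain ⟨T, hT⟩ := exists_encloses G hf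
  have hfT : support f ⊆ T := fun x hx => (hT x hx).1
  have hsupp : support (fun x => ‖f x‖) = support f := by ext; simp
  obtain ⟨hlow, hup⟩ := sum_bounds_of_isoperimetricOn G hq hc hC (hsupp ▸ hfU) (hsupp ▸ hT)
  have hlap : ∑ x ∈ T, ∑ y ∈ G.neighborFinset x, (‖f x‖ - ‖f y‖) ^ 2
      ≤ ∑ x ∈ T, ∑ y ∈ G.neighborFinset x, ‖f x - f y‖ ^ 2 ∧
      ∑ x ∈ T, ∑ y ∈ G.neighborFinset x, ‖f x - f y‖ ^ 2
      ≤ ∑ x ∈ T, ∑ y ∈ G.neighborFinset x, (‖f x‖ + ‖f y‖) ^ 2 := by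
    constructor <;> refine sum_le_sum fun x _ => sum_le_sum fun y _ => ?_
    · exact sq_le_sq.2 ((abs_norm_sub_norm_le _ _).trans (le_abs_self _))
    · gcongr; exact norm_sub_le _ _
  rw [qDeg_add_qPot G q hf, qLap_eq_sum G hT, qPot_eq_sum _ hfT, qPot_eq_sum _ hfT]
  constructor <;> linarith [hlap.1, hlap.2]

lemma qLap_add_qPot_le_indicator_compl {q : V → ℝ} (hq : ∀ x, 0 ≤ q x) {f : V → ℂ}
    (hf : (support f).Finite) (s : Set V) {δ : ℝ} (hδ : 0 < δ) :
    qLap G f + qPot q f ≤ (1 + δ) * (qLap G (sᶜ.indicator f) + qPot q (sᶜ.indicator f))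
        + (1 + δ⁻¹) * (qLap G (s.indicator f) + qPot q (s.indicator f)) ∧
      qLap G (sᶜ.indicator f) + qPot q (sᶜ.indicator f) ≤ (1 + δ) * (qLap G f + qPot q f)
        + (1 + δ⁻¹) * (qLap G (s.indicator f) + qPot q (s.indicator f)) := by
  have hf₁ : (support (s.indicator f)).Finite :=
    hf.subset fun x hx => (Set.indicator_apply_ne_zero.1 hx).2
  have hf₂ : (support (sᶜ.indicator f)).Finite :=
    hf.subset fun x hx => (Set.indicator_apply_ne_zero.1 hx).2
  have hf_eq : sᶜ.indicator f + s.indicator f = f := Set.indicator_compl_add_self s f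
  have hQ := qPot_indicator_add_compl q s hf
  have hQ₁ : 0 ≤ qPot q (s.indicator f) := qPot_nonneg hq
  have hQ₂ : 0 ≤ qPot q (sᶜ.indicator f) := qPot_nonneg hq
  have hlap : qLap G f
      ≤ (1 + δ) * qLap G (sᶜ.indicator f) + (1 + δ⁻¹) * qLap G (s.indicator f) := by
    conv_lhs => rw [← hf_eq]
    exact qLap_add_le G hf₂ hf₁ hδ
  have hlap' : qLap G (sᶜ.indicator f)
      ≤ (1 + δ) * qLap G f + (1 + δ⁻¹) * qLap G (s.indicator f) := by
    rw [eq_add_neg_iff_add_eq.2 hf_eq, ← qLap_neg G (f := s.indicator f)]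
    exact qLap_add_le G hf (by simpa using hf₁) hδ
  have hδ' : 0 ≤ δ⁻¹ := inv_nonneg.2 hδ.le
  constructor
  · nlinarith [mul_nonneg hδ.le hQ₂, mul_nonneg hδ' hQ₁]
  · nlinarith [mul_nonneg hδ.le hQ₁, mul_nonneg hδ.le hQ₂, mul_nonneg hδ' hQ₁]

lemma qLap_add_qPot_indicator_finset_le {q : V → ℝ} (hq : ∀ x, 0 ≤ q x) (K : Finset V)
    {f : V → ℂ} (hf : (support f).Finite) :
    qDeg G ((↑K : Set V).indicator f) + qPot q ((↑K : Set V).indicator f)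
        ≤ (∑ z ∈ K, ((G.degree z : ℝ) + q z)) * qNormSq f ∧
      qLap G ((↑K : Set V).indicator f) + qPot q ((↑K : Set V).indicator f)
        ≤ 2 * ((∑ z ∈ K, ((G.degree z : ℝ) + q z)) * qNormSq f) := by
  have hf₁ : (support ((↑K : Set V).indicator f)).Finite :=
    hf.subset fun x hx => (Set.indicator_apply_ne_zero.1 hx).2
  have hw : ∀ z, 0 ≤ (G.degree z : ℝ) + q z := fun z => add_nonneg (Nat.cast_nonneg _) (hq z)
  have hD : qDeg G ((↑K : Set V).indicator f) + qPot q ((↑K : Set V).indicator f)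
      ≤ (∑ z ∈ K, ((G.degree z : ℝ) + q z)) * qNormSq f := by
    rw [qDeg_add_qPot G q hf₁]
    exact qPot_indicator_le (sum_nonneg fun z _ => hw z)
      (fun x hx => single_le_sum (f := fun z => (G.degree z : ℝ) + q z) (fun z _ => hw z) hx) hf
  have hQ : 0 ≤ qPot q ((↑K : Set V).indicator f) := qPot_nonneg hq
  exact ⟨hD, by linarith [qLap_le_two_mul_qDeg G hf₁]⟩

theorem qLap_add_qPot_bounds_of_isoperimetricOn_compl {q : V → ℝ} (hq : ∀ x, 0 ≤ q x)
    (K : Finset V) {c : ℝ} (hc : 0 ≤ c) (hC : IsoperimetricOn G q (↑K : Set V)ᶜ c) {δ : ℝ}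
    (hδ : 0 < δ) :
    ∃ k : ℝ, 0 ≤ k ∧ ∀ f : V → ℂ, (support f).Finite →
      (1 - √(1 - c ^ 2)) * (qDeg G f + qPot q f) - k * qNormSq f
          ≤ (1 + δ) * (qLap G f + qPot q f) ∧
        qLap G f + qPot q f
          ≤ (1 + δ) * (1 + √(1 - c ^ 2)) * (qDeg G f + qPot q f) + k * qNormSq f := by
  have hCK : 0 ≤ ∑ z ∈ K, ((G.degree z : ℝ) + q z) :=
    sum_nonneg fun z _ => add_nonneg (Nat.cast_nonneg _) (hq z)
  refine ⟨(3 + 2 * δ⁻¹) * ∑ z ∈ K, ((G.degree z : ℝ) + q z), by positivity, fun f hf => ?_⟩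
  have hfin : ∀ s : Set V, (support (s.indicator f)).Finite := fun s =>
    hf.subset fun x hx => (Set.indicator_apply_ne_zero.1 hx).2
  obtain ⟨hD₁, hE₁⟩ := qLap_add_qPot_indicator_finset_le G hq K hf
  obtain ⟨hE, hE₂⟩ := qLap_add_qPot_le_indicator_compl G hq hf (↑K) hδ
  obtain ⟨hlow₂, hup₂⟩ := qLap_add_qPot_bounds_of_isoperimetricOn G hq hc hC (hfin _)
    fun x hx => (Set.indicator_apply_ne_zero.1 hx).1
  have hD := qPot_indicator_add_compl (fun x => (G.degree x : ℝ) + q x) (↑K) hf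
  rw [← qDeg_add_qPot G q hf, ← qDeg_add_qPot G q (hfin _), ← qDeg_add_qPot G q (hfin _)] at hD
  have hD₁₀ : 0 ≤ qDeg G ((↑K : Set V).indicator f) + qPot q ((↑K : Set V).indicator f) :=
    add_nonneg (qPot_nonneg fun x => Nat.cast_nonneg _) (qPot_nonneg hq)
  have hs₀ : 0 ≤ √(1 - c ^ 2) := Real.sqrt_nonneg _
  have hδ' : 0 ≤ δ⁻¹ := inv_nonneg.2 hδ.le
  constructor
  · nlinarith [mul_le_mul_of_nonneg_left hE₁ (by positivity : 0 ≤ 1 + δ⁻¹), mul_nonneg hs₀ hD₁₀]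
  · calc qLap G f + qPot q f
        ≤ (1 + δ) * ((1 + √(1 - c ^ 2))
            * (qDeg G ((↑K : Set V)ᶜ.indicator f) + qPot q ((↑K : Set V)ᶜ.indicator f)))
          + (1 + δ⁻¹) * (2 * ((∑ z ∈ K, ((G.degree z : ℝ) + q z)) * qNormSq f)) := by
          refine hE.trans ?_
          gcongr
      _ ≤ _ := by
          rw [hD]
          nlinarith [mul_nonneg (by positivity : 0 ≤ (1 + δ) * (1 + √(1 - c ^ 2))) hD₁₀]

lemma exists_pos_lt_with_bounds {α ε : ℝ} (hα : 0 < α) (hε : 0 < ε) :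
    ∃ δ > 0, ∃ c, 0 ≤ c ∧ c < α ∧
      (1 + δ) * (1 + √(1 - c ^ 2)) ≤ (1 + ε) * (1 + √(1 - α ^ 2)) ∧
      (1 + δ) * ((1 - ε) * (1 - √(1 - α ^ 2))) ≤ 1 - √(1 - c ^ 2) := by
  have hs : √(1 - α ^ 2) < 1 := (Real.sqrt_lt' one_pos).2 (by nlinarith)
  have hs₀ : 0 ≤ √(1 - α ^ 2) := Real.sqrt_nonneg _
  -- both bounds hold strictly at `δ = 0`, `c = α`; by continuity they persist for `c = α - δ`
  have hcont : Continuous fun t : ℝ => √(1 - (α - t) ^ 2) := by fun_prop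
  have h₁ : ∀ᶠ t in 𝓝 0, (1 + t) * (1 + √(1 - (α - t) ^ 2)) < (1 + ε) * (1 + √(1 - α ^ 2)) :=
    ((continuous_const.add continuous_id).mul (continuous_const.add hcont)).continuousAt
      |>.eventually_lt continuousAt_const (by norm_num; nlinarith)
  have h₂ : ∀ᶠ t in 𝓝 0, (1 + t) * ((1 - ε) * (1 - √(1 - α ^ 2))) + √(1 - (α - t) ^ 2) < 1 :=
    (((continuous_const.add continuous_id).mul continuous_const).add hcont).continuousAt
      |>.eventually_lt continuousAt_const (by norm_num; nlinarith)
  obtain ⟨t, ⟨ht₁, ht₂⟩, ht⟩ :=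
    ((h₁.and h₂).filter_mono nhdsWithin_le_nhds |>.and (Ioo_mem_nhdsGT hα)).exists
  exact ⟨t, ht.1, α - t, by linarith [ht.2], by linarith [ht.1], ht₁.le, by linarith⟩

theorem stmt15 (q : V → ℝ) (hq : ∀ x, 0 ≤ q x)
    (hα : 0 < cheegerInfty G q) :
    ∀ ε : ℝ, 0 < ε → ∃ kε : ℝ, 0 ≤ kε ∧
      ∀ f : V → ℂ, (Function.support f).Finite →
        (1 - ε) * (1 - Real.sqrt (1 - (cheegerInfty G q) ^ 2)) * (qDeg G f + qPot q f)
            - kε * qNormSq f ≤ qLap G f + qPot q f ∧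
        qLap G f + qPot q f ≤
          (1 + ε) * (1 + Real.sqrt (1 - (cheegerInfty G q) ^ 2)) * (qDeg G f + qPot q f)
            + kε * qNormSq f := by
  intro ε hε
  obtain ⟨δ, hδ, c, hc, hcα, hup, hlow⟩ := exists_pos_lt_with_bounds hα hε
  obtain ⟨K, hK⟩ := exists_lt_of_lt_ciSup hcα
  obtain ⟨k, hk, hbounds⟩ := qLap_add_qPot_bounds_of_isoperimetricOn_compl G hq K hc
    (isoperimetricOn_of_le_cheeger G hq hK.le) hδ
  refine ⟨k, hk, fun f hf => ?_⟩
  obtain ⟨hlow_f, hup_f⟩ := hbounds f hf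
  have hD : 0 ≤ qDeg G f + qPot q f :=
    add_nonneg (qPot_nonneg fun x => Nat.cast_nonneg _) (qPot_nonneg hq)
  have hN : 0 ≤ k * qNormSq f := mul_nonneg hk qNormSq_nonneg
  constructor
  · nlinarith [mul_le_mul_of_nonneg_right hlow hD]
  · nlinarith [mul_le_mul_of_nonneg_right hup hD]
end
end

section
/- Let G = (V,E) be a locally finite graph with V infinite, q : V → [0,∞), and assume (G,q) is (a,k)-sparse for some a > 0 and k ≥ 0. Set l := liminf_{|x|→∞}(deg(x) + q(x)) and assume k < l < ∞. Then α_∞ ≥ (l − k)/(l(1 + a)) > 0. -/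
open scoped BigOperators

noncomputable section

variable {V : Type*} [DecidableEq V] (G : SimpleGraph V) [DecidableRel G.Adj]

variable [G.LocallyFinite]

lemma my_edgesTwice_eq (W : Finset V) :
    edgesTwice G W = ∑ x ∈ W, (W.filter (G.Adj x)).card := by
  classical
  rw [edgesTwice, Finset.card_filter, Finset.sum_product]
  exact Finset.sum_congr rfl fun x _ => (Finset.card_filter _ _).symm

lemma my_degSum_eq (W : Finset V) :
    ∑ x ∈ W, G.degree x = edgesTwice G W + bdryCard G W := by
  classical
  rw [my_edgesTwice_eq, bdryCard, ← Finset.sum_add_distrib]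
  refine Finset.sum_congr rfl fun x hx => ?_
  have h1 : W.filter (G.Adj x) = (G.neighborFinset x).filter (fun y => y ∈ W) := by
    ext y
    simp only [Finset.mem_filter, SimpleGraph.mem_neighborFinset]
    tauto
  rw [h1, Finset.card_filter_add_card_filter_not]
  rfl

lemma my_cheeger_term_nonneg (q : V → ℝ) (hq : ∀ x, 0 ≤ q x) (U : Set V)
    (W : {W : Finset V // ↑W ⊆ U ∧ W.Nonempty}) :
    0 ≤ if (∑ x ∈ W.1, ((G.degree x : ℝ) + q x)) = 0 then 0
      else ((bdryCard G W.1 : ℝ) + ∑ x ∈ W.1, q x) / ∑ x ∈ W.1, ((G.degree x : ℝ) + q x) := by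
  split_ifs with h
  · exact le_refl 0
  · apply div_nonneg
    · exact add_nonneg (Nat.cast_nonneg _) (Finset.sum_nonneg fun x _ => hq x)
    · exact Finset.sum_nonneg fun x _ => add_nonneg (Nat.cast_nonneg _) (hq x)

lemma my_cheeger_le_one (q : V → ℝ) (hq : ∀ x, 0 ≤ q x) (U : Set V)
    (hU : ∃ x, x ∈ U) : cheeger G q U ≤ 1 := by
  obtain ⟨x, hx⟩ := hU
  have hW : ((({x} : Finset V) : Set V) ⊆ U ∧ ({x} : Finset V).Nonempty) := by
    constructor
    · intro y hy
      simp only [Finset.coe_singleton, Set.mem_singleton_iff] at hy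
      simpa [hy]
    · exact Finset.singleton_nonempty x
  have hbb : BddBelow (Set.range fun W : {W : Finset V // ↑W ⊆ U ∧ W.Nonempty} =>
      if (∑ x ∈ W.1, ((G.degree x : ℝ) + q x)) = 0 then 0
      else ((bdryCard G W.1 : ℝ) + ∑ x ∈ W.1, q x) / ∑ x ∈ W.1, ((G.degree x : ℝ) + q x)) := by
    refine ⟨0, ?_⟩
    rintro _ ⟨W, rfl⟩
    exact my_cheeger_term_nonneg G q hq U W
  refine le_trans (ciInf_le hbb ⟨{x}, hW⟩) ?_
  set W : Finset V := {x}
  split_ifs with h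
  · norm_num
  · have hD0 : (0:ℝ) ≤ ∑ y ∈ W, ((G.degree y : ℝ) + q y) :=
      Finset.sum_nonneg fun y _ => add_nonneg (Nat.cast_nonneg _) (hq y)
    rw [div_le_one (lt_of_le_of_ne hD0 (Ne.symm h))]
    have hB : (bdryCard G W : ℝ) ≤ ∑ y ∈ W, (G.degree y : ℝ) := by
      have : bdryCard G W ≤ ∑ y ∈ W, G.degree y := by
        rw [bdryCard]
        exact Finset.sum_le_sum fun y _ =>
          le_trans (Finset.card_filter_le _ _) (le_of_eq rfl)
      exact_mod_cast this
    rw [Finset.sum_add_distrib]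
    linarith

lemma my_cheeger_lower [Infinite V] (q : V → ℝ) (hq : ∀ x, 0 ≤ q x) (a k m : ℝ)
    (ha : 0 < a) (hk : 0 ≤ k) (hsparse : IsSparse G q a k) (K : Finset V)
    (hkm : k < m) (hm : ∀ x, x ∉ K → m ≤ (G.degree x : ℝ) + q x) :
    (m - k) / (m * (1 + a)) ≤ cheeger G q ((↑K : Set V)ᶜ) := by
  classical
  have : Nonempty {W : Finset V // ↑W ⊆ ((↑K : Set V)ᶜ) ∧ W.Nonempty} := by
    obtain ⟨x, hx⟩ := Infinite.exists_notMem_finset K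
    exact ⟨⟨{x}, by simpa using hx, Finset.singleton_nonempty x⟩⟩
  refine le_ciInf fun W => ?_
  obtain ⟨W, hWU, hWne⟩ := W
  set D := ∑ x ∈ W, ((G.degree x : ℝ) + q x) with hDdef
  have hm0 : 0 < m := lt_of_le_of_lt hk hkm
  have hmW : ∀ x ∈ W, m ≤ (G.degree x : ℝ) + q x := by
    intro x hx
    refine hm x ?_
    have := hWU hx
    simpa using this
  have hcard : (1:ℝ) ≤ (W.card : ℝ) := by exact_mod_cast hWne.card_pos
  have hDge : m * (W.card : ℝ) ≤ D := by
    calc m * (W.card : ℝ) = ∑ _x ∈ W, m := by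
          rw [Finset.sum_const, nsmul_eq_mul, mul_comm]
      _ ≤ D := Finset.sum_le_sum hmW
  have hD : 0 < D := by nlinarith
  rw [if_neg hD.ne']
  have hsp := hsparse W
  have hmax : ∑ x ∈ W, max (q x) 0 = ∑ x ∈ W, q x :=
    Finset.sum_congr rfl fun x _ => max_eq_left (hq x)
  rw [hmax] at hsp
  have hdeg : (∑ x ∈ W, (G.degree x : ℝ)) = (edgesTwice G W : ℝ) + (bdryCard G W : ℝ) := by
    exact_mod_cast congrArg (Nat.cast : ℕ → ℝ) (my_degSum_eq G W)
  have hDeq : D = (edgesTwice G W : ℝ) + ((bdryCard G W : ℝ) + ∑ x ∈ W, q x) := by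
    rw [hDdef, Finset.sum_add_distrib, hdeg]; ring
  rw [div_le_div_iff₀ (by positivity) hD]
  nlinarith [mul_le_mul_of_nonneg_left hsp hm0.le, mul_le_mul_of_nonneg_left hDge hk]


/-- for `V` infinite and `(G,q)` `(a,k)`-sparse with `a > 0`, `k ≥ 0`,
`q ≥ 0`, if `l := liminf_{|x|→∞}(deg + q)` satisfies `k < l < ∞`, then
`α_∞ ≥ (l-k)/(l(1+a)) > 0`. -/
theorem stmt18 [Countable V] [Infinite V] (q : V → ℝ) (hq : ∀ x, 0 ≤ q x)
    (a k : ℝ) (ha : 0 < a) (hk : 0 ≤ k) (hsparse : IsSparse G q a k)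
    (hbdd : BddAbove (Set.range fun K : Finset V =>
      ⨅ x : {x : V // x ∉ K}, ((G.degree (x : V) : ℝ) + q x)))
    (hl : k < ⨆ K : Finset V, ⨅ x : {x : V // x ∉ K}, ((G.degree (x : V) : ℝ) + q x)) :
    ∀ l : ℝ, l = ⨆ K : Finset V, ⨅ x : {x : V // x ∉ K}, ((G.degree (x : V) : ℝ) + q x) →
      0 < (l - k) / (l * (1 + a)) ∧ (l - k) / (l * (1 + a)) ≤ cheegerInfty G q := by
  classical
  intro l hleq
  have hkl : k < l := hleq ▸ hl
  have hl0 : 0 < l := lt_of_le_of_lt hk hkl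
  have h1a : (0:ℝ) < 1 + a := by linarith
  refine ⟨div_pos (by linarith) (mul_pos hl0 h1a), ?_⟩
  have hSbdd : BddAbove (Set.range fun K : Finset V => cheeger G q ((↑K : Set V)ᶜ)) := by
    refine ⟨1, ?_⟩
    rintro _ ⟨K, rfl⟩
    obtain ⟨x, hx⟩ := Infinite.exists_notMem_finset K
    exact my_cheeger_le_one G q hq _ ⟨x, by simpa using hx⟩
  by_contra hcon
  push_neg at hcon
  set g : ℝ → ℝ := fun t => (t - k) / (t * (1 + a)) with hg
  have hgc : ContinuousAt g l := by
    apply ContinuousAt.div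
    · fun_prop
    · fun_prop
    · exact (mul_pos hl0 h1a).ne'
  have hev1 : ∀ᶠ t in nhds l, cheegerInfty G q < g t :=
    hgc.eventually_const_lt hcon
  have hev2 : ∀ᶠ t in nhds l, k < t := eventually_gt_nhds hkl
  have hev : ∀ᶠ t in nhdsWithin l (Set.Iio l),
      (cheegerInfty G q < g t ∧ k < t) ∧ t < l := by
    refine Filter.Eventually.and (Filter.Eventually.filter_mono nhdsWithin_le_nhds
      (hev1.and hev2)) ?_
    exact eventually_mem_nhdsWithin
  obtain ⟨t, ⟨⟨htS, htk⟩, htl⟩⟩ := hev.exists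
  have ht0 : 0 < t := lt_of_le_of_lt hk htk
  obtain ⟨K, hK⟩ := exists_lt_of_lt_ciSup (hleq ▸ htl)
  set mK : ℝ := ⨅ x : {x : V // x ∉ K}, ((G.degree (x : V) : ℝ) + q x) with hmK
  have hbbK : BddBelow (Set.range fun x : {x : V // x ∉ K} =>
      ((G.degree (x : V) : ℝ) + q x)) := by
    refine ⟨0, ?_⟩
    rintro _ ⟨y, rfl⟩
    exact add_nonneg (Nat.cast_nonneg _) (hq _)
  have hmKle : ∀ x, x ∉ K → mK ≤ (G.degree x : ℝ) + q x := fun x hx =>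
    ciInf_le hbbK ⟨x, hx⟩
  have hlow := my_cheeger_lower G q hq a k mK ha hk hsparse K (lt_trans htk hK) hmKle
  have hmono : g t ≤ g mK := by
    rw [hg]
    simp only
    rw [div_le_div_iff₀ (by positivity) (by nlinarith)]
    nlinarith [mul_nonneg (mul_nonneg hk h1a.le) (sub_nonneg.2 hK.le)]
  have hle : cheeger G q ((↑K : Set V)ᶜ) ≤ cheegerInfty G q := le_ciSup hSbdd K
  have : g mK ≤ cheegerInfty G q := le_trans hlow hle
  linarith


end
end
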